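/- arXiv:1203.0123 — 6 statements merged into one kernel-verified Lean document; each statement's English description precedes it below -/
import Mathlib

section
/- Let E be a finite-dimensional real normed space and V a finite-dimensional subspace of the space of continuous vector fields E → E. Suppose there exist a basis Y₁,…,Y_r of V and a dense subset U ⊆ E such that for every p ∈ U the vectors Y₁(p),…,Y_r(p) are linearly independent in E. Let W₁,…,W_s ∈ V be linearly independent over ℝ, let b₁,…,b_s : E → ℝ be continuous functions, and suppose that the vector field X defined by X(x) = Σ_{j=1}^s b_j(x) • W_j(x) belongs to V. Then each b_j is a constant function. (Paper's Lemma: in a space of vector fields with a modular basis, module coefficients of elements of the space are necessarily constants.) -/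
/-!
At a point `p` where the basis `Y` of `V` is linearly independent, evaluation at `p` is injective
on `V`. The field `∑ j, b j p • W j` lies in `V` and agrees with `X = ∑ j, b j • W j` at `p`,
so it equals `X`.
Hence for any two points `p, q` of the dense set, `∑ j, (b j p - b j q) • W j = 0`, and the linear
independence of the `W j` gives `b j p = b j q`: each `b j` is constant on a dense set, hence,
being continuous, constant.
-/

theorem Submodule.injOn_eval_of_linearIndependent_basis_eval {R α E ι : Type*} [Ring R]
    [AddCommGroup E] [Module R E] {V : Submodule R (α → E)} (Y : Module.Basis ι R V) {p : α}
    (hp : LinearIndependent R fun i => (Y i : α → E) p) :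
    Set.InjOn (fun f : α → E => f p) V := by
  have hinj : Function.Injective ((LinearMap.proj p).comp V.subtype) :=
    LinearMap.injective_of_linearIndependent Y.span_eq hp
  intro f hf g hg hfg
  exact congrArg Subtype.val (hinj (a₁ := ⟨f, hf⟩) (a₂ := ⟨g, hg⟩) hfg)

theorem modular_coefficients_are_constant_general
    {E : Type*} [NormedAddCommGroup E] [NormedSpace ℝ E]
    (V : Submodule ℝ (E → E))
    (hmod : ∃ (r : ℕ) (Y : Module.Basis (Fin r) ℝ V) (U : Set E), Dense U ∧
      ∀ p ∈ U, LinearIndependent ℝ fun i => (Y i : E → E) p)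
    (s : ℕ) (W : Fin s → E → E) (hWV : ∀ j, W j ∈ V)
    (hWind : LinearIndependent ℝ W)
    (b : Fin s → E → ℝ) (hb : ∀ j, Continuous (b j))
    (hXV : (fun x => ∑ j, b j x • W j x) ∈ V) :
    ∀ j, ∃ c : ℝ, ∀ x : E, b j x = c := by
  obtain ⟨r, Y, U, hU, hUmod⟩ := hmod
  have hfreeze : ∀ p ∈ U, ∑ j, b j p • W j = fun x => ∑ j, b j x • W j x := fun p hp =>
    V.injOn_eval_of_linearIndependent_basis_eval Y (hUmod p hp)
      (V.sum_mem fun j _ => V.smul_mem _ (hWV j)) hXV (by simp [Finset.sum_apply])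
  have hcoeff : ∀ p ∈ U, ∀ q ∈ U, ∀ j, b j p = b j q := fun p hp q hq =>
    Fintype.linearIndependent_iffₛ.mp hWind _ _ ((hfreeze p hp).trans (hfreeze q hq).symm)
  obtain ⟨p₀, hp₀⟩ := hU.nonempty
  intro j
  have hconst : b j = fun _ => b j p₀ :=
    Continuous.ext_on hU (hb j) continuous_const fun p hp => hcoeff p hp p₀ hp₀ j
  exact ⟨b j p₀, congrFun hconst⟩

/-- In a finite-dimensional space of continuous vector fields admitting a basis that is
modular on a dense set, the module coefficients of linear combinations that belong to the
space are necessarily constant. -/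
theorem modular_coefficients_are_constant
    {E : Type*} [NormedAddCommGroup E] [NormedSpace ℝ E] [FiniteDimensional ℝ E]
    (V : Submodule ℝ (E → E)) (hVcont : ∀ f ∈ V, Continuous f)
    (hmod : ∃ (r : ℕ) (Y : Module.Basis (Fin r) ℝ V) (U : Set E), Dense U ∧
      ∀ p ∈ U, LinearIndependent ℝ fun i => (Y i : E → E) p)
    (s : ℕ) (W : Fin s → E → E) (hWV : ∀ j, W j ∈ V)
    (hWind : LinearIndependent ℝ W)
    (b : Fin s → E → ℝ) (hb : ∀ j, Continuous (b j))
    (hXV : (fun x => ∑ j, b j x • W j x) ∈ V) :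
    ∀ j, ∃ c : ℝ, ∀ x : E, b j x = c :=
  modular_coefficients_are_constant_general V hmod s W hWV hWind b hb hXV
end

section
/- Let I ⊆ ℝ be an open interval, b₀, b₁ : ℝ → ℝ, and let x₁, x₂ : ℝ → ℝ be twice differentiable on I with x_a''(t) = −b₀(t)·x_a(t) − b₁(t)·x_a'(t) on I for a = 1,2. Let k₁, k₂ ∈ ℝ be such that k₁·x₁(t) + k₂·x₂(t) ≠ 0 for all t ∈ I. Then the function y(t) := (k₁·x₁'(t) + k₂·x₂'(t)) / (k₁·x₁(t) + k₂·x₂(t)) is differentiable on I and satisfies the Riccati equation y'(t) = −b₀(t) − b₁(t)·y(t) − y(t)² on I. (The paper's mixed superposition rule (iniMix) for the Riccati hierarchy, case s = 2.) -/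
/-! The quotient `y = x' / x` of a nonvanishing solution of `x'' = -b₀ x - b₁ x'` solves the
Riccati equation, and `k₁ x₁ + k₂ x₂` is such a solution by linearity. -/

theorem HasDerivAt.riccati_of_linear_second_order {x x' : ℝ → ℝ} {x'' b₀ b₁ t : ℝ}
    (hx : HasDerivAt x (x' t) t) (hx' : HasDerivAt x' x'' t)
    (hode : x'' = -b₀ * x t - b₁ * x' t) (hne : x t ≠ 0) :
    HasDerivAt (fun s => x' s / x s)
      (-b₀ - b₁ * (x' t / x t) - (x' t / x t) ^ 2) t := by
  refine (hx'.div hx hne).congr_deriv ?_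
  rw [hode]
  field_simp

theorem riccati_mixed_superposition_rule_general
    (I : Set ℝ)
    (b₀ b₁ : ℝ → ℝ) (x₁ x₁' x₁'' x₂ x₂' x₂'' : ℝ → ℝ)
    (hx₁ : ∀ t ∈ I, HasDerivAt x₁ (x₁' t) t)
    (hx₁' : ∀ t ∈ I, HasDerivAt x₁' (x₁'' t) t)
    (hx₂ : ∀ t ∈ I, HasDerivAt x₂ (x₂' t) t)
    (hx₂' : ∀ t ∈ I, HasDerivAt x₂' (x₂'' t) t)
    (hode₁ : ∀ t ∈ I, x₁'' t = -b₀ t * x₁ t - b₁ t * x₁' t)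
    (hode₂ : ∀ t ∈ I, x₂'' t = -b₀ t * x₂ t - b₁ t * x₂' t)
    (k₁ k₂ : ℝ) (hne : ∀ t ∈ I, k₁ * x₁ t + k₂ * x₂ t ≠ 0) :
    ∀ t ∈ I, HasDerivAt
      (fun s => (k₁ * x₁' s + k₂ * x₂' s) / (k₁ * x₁ s + k₂ * x₂ s))
      (-b₀ t - b₁ t * ((k₁ * x₁' t + k₂ * x₂' t) / (k₁ * x₁ t + k₂ * x₂ t))
        - ((k₁ * x₁' t + k₂ * x₂' t) / (k₁ * x₁ t + k₂ * x₂ t)) ^ 2) t := by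
  intro t ht
  have hx : HasDerivAt (fun s => k₁ * x₁ s + k₂ * x₂ s) (k₁ * x₁' t + k₂ * x₂' t) t :=
    ((hx₁ t ht).const_mul k₁).add ((hx₂ t ht).const_mul k₂)
  have hx' : HasDerivAt (fun s => k₁ * x₁' s + k₂ * x₂' s) (k₁ * x₁'' t + k₂ * x₂'' t) t :=
    ((hx₁' t ht).const_mul k₁).add ((hx₂' t ht).const_mul k₂)
  exact hx.riccati_of_linear_second_order hx'
    (by rw [hode₁ t ht, hode₂ t ht]; ring) (hne t ht)

/-- The mixed superposition rule for the Riccati equation (case `s = 2` of the Riccati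
hierarchy): if `x₁, x₂` solve the linear equation `x'' = -b₀ x - b₁ x'` and
`k₁ x₁ + k₂ x₂` does not vanish, then `y = (k₁ x₁' + k₂ x₂')/(k₁ x₁ + k₂ x₂)` solves the
Riccati equation `y' = -b₀ - b₁ y - y²`. -/
theorem riccati_mixed_superposition_rule
    (I : Set ℝ) (hI : IsOpen I) (hI' : I.OrdConnected)
    (b₀ b₁ : ℝ → ℝ) (x₁ x₁' x₁'' x₂ x₂' x₂'' : ℝ → ℝ)
    (hx₁ : ∀ t ∈ I, HasDerivAt x₁ (x₁' t) t)
    (hx₁' : ∀ t ∈ I, HasDerivAt x₁' (x₁'' t) t)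
    (hx₂ : ∀ t ∈ I, HasDerivAt x₂ (x₂' t) t)
    (hx₂' : ∀ t ∈ I, HasDerivAt x₂' (x₂'' t) t)
    (hode₁ : ∀ t ∈ I, x₁'' t = -b₀ t * x₁ t - b₁ t * x₁' t)
    (hode₂ : ∀ t ∈ I, x₂'' t = -b₀ t * x₂ t - b₁ t * x₂' t)
    (k₁ k₂ : ℝ) (hne : ∀ t ∈ I, k₁ * x₁ t + k₂ * x₂ t ≠ 0) :
    ∀ t ∈ I, HasDerivAt
      (fun s => (k₁ * x₁' s + k₂ * x₂' s) / (k₁ * x₁ s + k₂ * x₂ s))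
      (-b₀ t - b₁ t * ((k₁ * x₁' t + k₂ * x₂' t) / (k₁ * x₁ t + k₂ * x₂ t))
        - ((k₁ * x₁' t + k₂ * x₂' t) / (k₁ * x₁ t + k₂ * x₂ t)) ^ 2) t :=
  riccati_mixed_superposition_rule_general I b₀ b₁ x₁ x₁' x₁'' x₂ x₂' x₂'' hx₁ hx₁' hx₂ hx₂' hode₁
    hode₂ k₁ k₂ hne
end

section
/- Let I ⊆ ℝ be an open interval, b₀, b₁ : ℝ → ℝ continuous on I, and let x₁, x₂ : ℝ → ℝ be twice differentiable on I with x_a'' = −b₀·x_a − b₁·x_a' on I for a = 1,2, and with nonvanishing Wronskian x₁(t)·x₂'(t) − x₁'(t)·x₂(t) ≠ 0 on I. Let y : ℝ → ℝ be differentiable on I and satisfy y'(t) = −b₀(t) − b₁(t)·y(t) − y(t)² on I. Then there exist constants k₁, k₂ ∈ ℝ, not both zero, such that k₁·x₁(t) + k₂·x₂(t) ≠ 0 on I and y(t) = (k₁·x₁'(t) + k₂·x₂'(t)) / (k₁·x₁(t) + k₂·x₂(t)) for all t ∈ I. (Every solution of a Riccati equation is obtained from the mixed superposition rule (iniMix)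 with s = 2.) -/
/-!
For a solution `x` of `x'' = -b₀ x - b₁ x'`, the defect `f = x' - y x` of the Riccati solution `y`
satisfies the first-order linear equation `f' = -(b₁ + y) f`. Two solutions `f₁, f₂` of one such
equation `f' = a f` are proportional: for `u = f₁ f₂(t₀) - f₂ f₁(t₀)` and `F = f₁² + f₂²`, both
`u²` and `F` solve `z' = 2a z`, so `u² / F` is constant, and it vanishes at `t₀`. Since
`W = x₁ f₂ - f₁ x₂ ≠ 0`, `F` never vanishes and `k = (f₂(t₀), -f₁(t₀)) ≠ 0`. Then
`k₁ f₁ + k₂ f₂ = 0` reads `k·x' = y (k·x)`, and `k·x` cannot vanish, since otherwise `k·x'` would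
too and `k` would lie in the kernel of the Wronskian matrix.
-/

theorem eq_zero_of_mul_sub_mul_ne_zero {R : Type*} [CommRing R] [NoZeroDivisors R]
    {p₁ p₂ q₁ q₂ k₁ k₂ : R} (hW : p₁ * q₂ - q₁ * p₂ ≠ 0)
    (hp : k₁ * p₁ + k₂ * p₂ = 0) (hq : k₁ * q₁ + k₂ * q₂ = 0) : k₁ = 0 ∧ k₂ = 0 := by
  have h₁ : k₁ * (p₁ * q₂ - q₁ * p₂) = 0 := by linear_combination q₂ * hp - p₂ * hq
  have h₂ : k₂ * (p₁ * q₂ - q₁ * p₂) = 0 := by linear_combination p₁ * hq - q₁ * hp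
  exact ⟨(mul_eq_zero.1 h₁).resolve_right hW, (mul_eq_zero.1 h₂).resolve_right hW⟩

theorem hasDerivAt_div_eq_zero_of_hasDerivAt_mul {u w : ℝ → ℝ} {a t : ℝ}
    (hu : HasDerivAt u (a * u t) t) (hw : HasDerivAt w (a * w t) t) (hw₀ : w t ≠ 0) :
    HasDerivAt (fun s => u s / w s) 0 t :=
  (hu.div hw hw₀).congr_deriv (by rw [div_eq_zero_iff]; left; ring)

theorem IsOpen.mul_eq_mul_of_hasDerivAt_mul {I : Set ℝ} (hI : IsOpen I) (hI' : IsPreconnected I)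
    {a f₁ f₂ : ℝ → ℝ} (hf₁ : ∀ t ∈ I, HasDerivAt f₁ (a t * f₁ t) t)
    (hf₂ : ∀ t ∈ I, HasDerivAt f₂ (a t * f₂ t) t) (hf : ∀ t ∈ I, f₁ t ≠ 0 ∨ f₂ t ≠ 0)
    {t₀ : ℝ} (ht₀ : t₀ ∈ I) : ∀ t ∈ I, f₁ t * f₂ t₀ = f₂ t * f₁ t₀ := by
  set u : ℝ → ℝ := fun t => f₁ t * f₂ t₀ - f₂ t * f₁ t₀
  set F : ℝ → ℝ := fun t => f₁ t ^ 2 + f₂ t ^ 2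
  have hF₀ : ∀ t ∈ I, F t ≠ 0 := fun t ht => by
    rcases hf t ht with h | h
    · exact (add_pos_of_pos_of_nonneg (sq_pos_of_ne_zero h) (sq_nonneg _)).ne'
    · exact (add_pos_of_nonneg_of_pos (sq_nonneg _) (sq_pos_of_ne_zero h)).ne'
  have hquot : ∀ t ∈ I, HasDerivAt (fun s => u s ^ 2 / F s) 0 t := fun t ht => by
    have hu : HasDerivAt u (a t * u t) t :=
      (((hf₁ t ht).mul_const _).sub ((hf₂ t ht).mul_const _)).congr_deriv (by simp only [u]; ring)
    have hu_sq : HasDerivAt (fun s => u s ^ 2) (2 * a t * u t ^ 2) t :=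
      (hu.pow 2).congr_deriv (by ring)
    have hF : HasDerivAt F (2 * a t * F t) t :=
      (((hf₁ t ht).pow 2).add ((hf₂ t ht).pow 2)).congr_deriv (by ring)
    exact hasDerivAt_div_eq_zero_of_hasDerivAt_mul hu_sq hF (hF₀ t ht)
  intro t ht
  have hconst : u t ^ 2 / F t = u t₀ ^ 2 / F t₀ :=
    hI.is_const_of_deriv_eq_zero hI'
      (fun s hs => (hquot s hs).differentiableAt.differentiableWithinAt)
      (fun s hs => (hquot s hs).deriv) ht ht₀
  have hu₀ : u t₀ = 0 := by ring
  rw [hu₀, zero_pow two_ne_zero, zero_div, div_eq_zero_iff, or_iff_left (hF₀ t ht)] at hconst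
  exact sub_eq_zero.1 (pow_eq_zero_iff two_ne_zero |>.1 hconst)

theorem hasDerivAt_sub_mul_of_riccati {x x' y : ℝ → ℝ} {β₀ β₁ x'' t : ℝ}
    (hx : HasDerivAt x (x' t) t) (hx' : HasDerivAt x' x'' t)
    (hode : x'' = -β₀ * x t - β₁ * x' t) (hy : HasDerivAt y (-β₀ - β₁ * y t - y t ^ 2) t) :
    HasDerivAt (fun s => x' s - y s * x s) (-(β₁ + y t) * (x' t - y t * x t)) t :=
  (hx'.sub (hy.mul hx)).congr_deriv (by rw [hode]; ring)

theorem riccati_mixed_superposition_rule_general_solution_general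
    (I : Set ℝ) (hI : IsOpen I) (hI' : I.OrdConnected)
    (b₀ b₁ : ℝ → ℝ)
    (x₁ x₁' x₁'' x₂ x₂' x₂'' : ℝ → ℝ)
    (hx₁ : ∀ t ∈ I, HasDerivAt x₁ (x₁' t) t)
    (hx₁' : ∀ t ∈ I, HasDerivAt x₁' (x₁'' t) t)
    (hx₂ : ∀ t ∈ I, HasDerivAt x₂ (x₂' t) t)
    (hx₂' : ∀ t ∈ I, HasDerivAt x₂' (x₂'' t) t)
    (hode₁ : ∀ t ∈ I, x₁'' t = -b₀ t * x₁ t - b₁ t * x₁' t)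
    (hode₂ : ∀ t ∈ I, x₂'' t = -b₀ t * x₂ t - b₁ t * x₂' t)
    (hW : ∀ t ∈ I, x₁ t * x₂' t - x₁' t * x₂ t ≠ 0)
    (y : ℝ → ℝ)
    (hy : ∀ t ∈ I, HasDerivAt y (-b₀ t - b₁ t * y t - y t ^ 2) t) :
    ∃ k₁ k₂ : ℝ, ¬(k₁ = 0 ∧ k₂ = 0) ∧
      (∀ t ∈ I, k₁ * x₁ t + k₂ * x₂ t ≠ 0) ∧
      (∀ t ∈ I, y t = (k₁ * x₁' t + k₂ * x₂' t) / (k₁ * x₁ t + k₂ * x₂ t)) := by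
  rcases I.eq_empty_or_nonempty with rfl | ⟨t₀, ht₀⟩
  · exact ⟨1, 0, by simp, by simp, by simp⟩
  set f₁ : ℝ → ℝ := fun t => x₁' t - y t * x₁ t
  set f₂ : ℝ → ℝ := fun t => x₂' t - y t * x₂ t
  have hf : ∀ t ∈ I, f₁ t ≠ 0 ∨ f₂ t ≠ 0 := fun t ht => by
    by_contra! h
    exact hW t ht (by linear_combination x₁ t * h.2 - x₂ t * h.1)
  have hprop := hI.mul_eq_mul_of_hasDerivAt_mul hI'.isPreconnected
    (fun t ht => hasDerivAt_sub_mul_of_riccati (hx₁ t ht) (hx₁' t ht) (hode₁ t ht) (hy t ht))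
    (fun t ht => hasDerivAt_sub_mul_of_riccati (hx₂ t ht) (hx₂' t ht) (hode₂ t ht) (hy t ht))
    hf ht₀
  have hk : ¬(f₂ t₀ = 0 ∧ -f₁ t₀ = 0) := fun h => (hf t₀ ht₀).elim (· (neg_eq_zero.1 h.2)) (· h.1)
  have hnum : ∀ t ∈ I, f₂ t₀ * x₁' t + -f₁ t₀ * x₂' t = y t * (f₂ t₀ * x₁ t + -f₁ t₀ * x₂ t) :=
    fun t ht => by linear_combination hprop t ht
  have hden : ∀ t ∈ I, f₂ t₀ * x₁ t + -f₁ t₀ * x₂ t ≠ 0 := fun t ht h₀ =>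
    hk (eq_zero_of_mul_sub_mul_ne_zero (hW t ht) h₀ (by rw [hnum t ht, h₀, mul_zero]))
  exact ⟨f₂ t₀, -f₁ t₀, hk, hden,
    fun t ht => by rw [hnum t ht, mul_div_cancel_right₀ _ (hden t ht)]⟩

/-- Every solution of a Riccati equation is obtained from the mixed superposition rule:
given two solutions `x₁, x₂` of the linear equation `x'' = -b₀ x - b₁ x'` with
nonvanishing Wronskian, every solution `y` of `y' = -b₀ - b₁ y - y²` on the open interval
`I` has the form `y = (k₁ x₁' + k₂ x₂')/(k₁ x₁ + k₂ x₂)` for suitable constants. -/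
theorem riccati_mixed_superposition_rule_general_solution
    (I : Set ℝ) (hI : IsOpen I) (hI' : I.OrdConnected)
    (b₀ b₁ : ℝ → ℝ) (hb₀ : ContinuousOn b₀ I) (hb₁ : ContinuousOn b₁ I)
    (x₁ x₁' x₁'' x₂ x₂' x₂'' : ℝ → ℝ)
    (hx₁ : ∀ t ∈ I, HasDerivAt x₁ (x₁' t) t)
    (hx₁' : ∀ t ∈ I, HasDerivAt x₁' (x₁'' t) t)
    (hx₂ : ∀ t ∈ I, HasDerivAt x₂ (x₂' t) t)
    (hx₂' : ∀ t ∈ I, HasDerivAt x₂' (x₂'' t) t)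
    (hode₁ : ∀ t ∈ I, x₁'' t = -b₀ t * x₁ t - b₁ t * x₁' t)
    (hode₂ : ∀ t ∈ I, x₂'' t = -b₀ t * x₂ t - b₁ t * x₂' t)
    (hW : ∀ t ∈ I, x₁ t * x₂' t - x₁' t * x₂ t ≠ 0)
    (y : ℝ → ℝ)
    (hy : ∀ t ∈ I, HasDerivAt y (-b₀ t - b₁ t * y t - y t ^ 2) t) :
    ∃ k₁ k₂ : ℝ, ¬(k₁ = 0 ∧ k₂ = 0) ∧
      (∀ t ∈ I, k₁ * x₁ t + k₂ * x₂ t ≠ 0) ∧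
      (∀ t ∈ I, y t = (k₁ * x₁' t + k₂ * x₂' t) / (k₁ * x₁ t + k₂ * x₂ t)) :=
  riccati_mixed_superposition_rule_general_solution_general I hI hI' b₀ b₁ x₁ x₁' x₁'' x₂ x₂' x₂''
    hx₁ hx₁' hx₂ hx₂' hode₁ hode₂ hW y hy
end

section
/- Let I ⊆ ℝ be an open interval, n ∈ ℝ with n ≠ 1, a, b : ℝ → ℝ, and let x₁, x₂ : ℝ → ℝ be differentiable on I with x₁(t) > 0, x₂(t) > 0, x₁'(t) = a(t)·x₁(t) + b(t)·x₁(t)^n, and x₂'(t) = a(t)·x₂(t) for all t ∈ I. Let k ∈ ℝ be such that x₁(t)^{1−n} + k·x₂(t)^{1−n} > 0 for all t ∈ I. Then the function x(t) := (x₁(t)^{1−n} + k·x₂(t)^{1−n})^{1/(1−n)} is differentiable, positive on I, and satisfies the Bernoulli equation x'(t) = a(t)·x(t) + b(t)·x(t)^n on I. (The paper's mixed superposition rule (Mix2) for Bernoulli equations.) -/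
/-!
The substitution `y = x ^ (1 - n)` turns the Bernoulli equation `x' = a x + b xⁿ` for positive
`x` into the linear equation `y' = (1 - n) (a y + b)`, and the homogeneous equation `x' = a x`
(the case `b = 0`) into `y' = (1 - n) a y`. A particular solution of the linear equation plus
`k` times a solution of its homogeneous part solves it again, and since `n ≠ 1` the substitution
is undone by `x = y ^ (1 / (1 - n))`.
-/

open Real

theorem HasDerivAt.rpow_one_sub_of_bernoulli {x : ℝ → ℝ} {a b n t : ℝ}
    (hx : HasDerivAt x (a * x t + b * x t ^ n) t) (hpos : 0 < x t) :
    HasDerivAt (fun s => x s ^ (1 - n)) ((1 - n) * (a * x t ^ (1 - n) + b)) t := by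
  convert hx.rpow_const (p := 1 - n) (Or.inl hpos.ne') using 1
  have hxn : x t ^ n ≠ 0 := (rpow_pos_of_pos hpos n).ne'
  rw [rpow_sub_one hpos.ne', rpow_sub hpos, rpow_one]
  field_simp

theorem HasDerivAt.rpow_inv_one_sub_of_linear {y : ℝ → ℝ} {a b n t : ℝ}
    (hy : HasDerivAt y ((1 - n) * (a * y t + b)) t) (hpos : 0 < y t) (hn : n ≠ 1) :
    HasDerivAt (fun s => y s ^ (1 / (1 - n)))
      (a * y t ^ (1 / (1 - n)) + b * (y t ^ (1 / (1 - n))) ^ n) t := by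
  have h1n : 1 - n ≠ 0 := sub_ne_zero.mpr hn.symm
  have hexp : 1 / (1 - n) * n = 1 / (1 - n) - 1 := by field_simp; ring
  convert hy.rpow_const (p := 1 / (1 - n)) (Or.inl hpos.ne') using 1
  rw [← rpow_mul hpos.le, hexp, rpow_sub_one hpos.ne']
  field_simp

theorem bernoulli_mixed_superposition_rule_general
    (I : Set ℝ)
    (n : ℝ) (hn : n ≠ 1) (a b : ℝ → ℝ) (x₁ x₂ : ℝ → ℝ)
    (hpos₁ : ∀ t ∈ I, 0 < x₁ t) (hpos₂ : ∀ t ∈ I, 0 < x₂ t)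
    (hx₁ : ∀ t ∈ I, HasDerivAt x₁ (a t * x₁ t + b t * x₁ t ^ n) t)
    (hx₂ : ∀ t ∈ I, HasDerivAt x₂ (a t * x₂ t) t)
    (k : ℝ) (hk : ∀ t ∈ I, 0 < x₁ t ^ (1 - n) + k * x₂ t ^ (1 - n)) :
    ∀ t ∈ I,
      0 < (x₁ t ^ (1 - n) + k * x₂ t ^ (1 - n)) ^ (1 / (1 - n)) ∧
      HasDerivAt (fun s => (x₁ s ^ (1 - n) + k * x₂ s ^ (1 - n)) ^ (1 / (1 - n)))
        (a t * ((x₁ t ^ (1 - n) + k * x₂ t ^ (1 - n)) ^ (1 / (1 - n)))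
          + b t * ((x₁ t ^ (1 - n) + k * x₂ t ^ (1 - n)) ^ (1 / (1 - n))) ^ n) t := by
  intro t ht
  refine ⟨rpow_pos_of_pos (hk t ht) _, HasDerivAt.rpow_inv_one_sub_of_linear ?_ (hk t ht) hn⟩
  have hy₁ := (hx₁ t ht).rpow_one_sub_of_bernoulli (hpos₁ t ht)
  have hy₂ : HasDerivAt (fun s => x₂ s ^ (1 - n)) ((1 - n) * (a t * x₂ t ^ (1 - n) + 0)) t :=
    HasDerivAt.rpow_one_sub_of_bernoulli (b := 0) (by simpa using hx₂ t ht) (hpos₂ t ht)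
  exact (hy₁.add (hy₂.const_mul k)).congr_deriv (by ring)

/-- The mixed superposition rule for Bernoulli equations: if `x₁` solves the Bernoulli
equation `x' = a x + b xⁿ` and `x₂` solves the homogeneous equation `x' = a x`, and
`x₁^(1-n) + k x₂^(1-n) > 0`, then `x = (x₁^(1-n) + k x₂^(1-n))^(1/(1-n))` is a positive
solution of the Bernoulli equation. -/
theorem bernoulli_mixed_superposition_rule
    (I : Set ℝ) (hI : IsOpen I) (hI' : I.OrdConnected)
    (n : ℝ) (hn : n ≠ 1) (a b : ℝ → ℝ) (x₁ x₂ : ℝ → ℝ)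
    (hpos₁ : ∀ t ∈ I, 0 < x₁ t) (hpos₂ : ∀ t ∈ I, 0 < x₂ t)
    (hx₁ : ∀ t ∈ I, HasDerivAt x₁ (a t * x₁ t + b t * x₁ t ^ n) t)
    (hx₂ : ∀ t ∈ I, HasDerivAt x₂ (a t * x₂ t) t)
    (k : ℝ) (hk : ∀ t ∈ I, 0 < x₁ t ^ (1 - n) + k * x₂ t ^ (1 - n)) :
    ∀ t ∈ I,
      0 < (x₁ t ^ (1 - n) + k * x₂ t ^ (1 - n)) ^ (1 / (1 - n)) ∧
      HasDerivAt (fun s => (x₁ s ^ (1 - n) + k * x₂ s ^ (1 - n)) ^ (1 / (1 - n)))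
        (a t * ((x₁ t ^ (1 - n) + k * x₂ t ^ (1 - n)) ^ (1 / (1 - n)))
          + b t * ((x₁ t ^ (1 - n) + k * x₂ t ^ (1 - n)) ^ (1 / (1 - n))) ^ n) t :=
  bernoulli_mixed_superposition_rule_general I n hn a b x₁ x₂ hpos₁ hpos₂ hx₁ hx₂ k hk
end

section
/- Let I ⊆ ℝ be an open interval, ω : ℝ → ℝ, c ∈ ℝ, and let x₁, x₂ : ℝ → ℝ be twice differentiable on I with x_a''(t) = −ω(t)²·x_a(t) on I for a = 1,2. Suppose the Wronskian is a nonzero constant: there is W₀ ≠ 0 with x₁(t)·x₂'(t) − x₁'(t)·x₂(t) = W₀ for all t ∈ I. Let k₁, k₂ ∈ ℝ satisfy 4k₁k₂ − c·W₀² ≥ 0, set Q(t) := k₁·x₁(t)² + k₂·x₂(t)² + √(4k₁k₂ − c·W₀²)·x₁(t)·x₂(t), and assume Q(t) > 0 for all t ∈ I. Then the function x(t) := (√2 / |W₀|)·√(Q(t)) is positive, twice differentiable on I, and satisfies the Milne–Pinney equation x''(t) = −ω(t)²·x(t) + c / x(t)³ for all t ∈ I. (The paper's superposition formula (Erm) for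 Milne–Pinney equations / Winternitz–Smorodinsky oscillators in terms of solutions of the t-dependent harmonic oscillator.) -/
/-!
Write `Q = k₁x₁² + k₂x₂² + αx₁x₂` with `α = √(4k₁k₂ - cW₀²)`. Along solutions of
`x'' = -ω²x` one has `Q' = N`, `N' = 2P - 2ω²Q` with `P` the same quadratic form evaluated
at `(x₁', x₂')`, and the discriminant identity `4QP - N² = (4k₁k₂ - α²)W² = cW₀⁴`.
These three relations alone force `y = √Q` to satisfy the Ermakov equation
`y'' = -ω²y + (4QP - N²)/(4y³)`, and the factor `√2/|W₀|` rescales the constant to `c`.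
-/

def quadForm (k₁ k₂ α a b : ℝ) : ℝ := k₁ * a ^ 2 + k₂ * b ^ 2 + α * a * b

/-- The polar form of `quadForm`, i.e. `q(v + v') - q(v) - q(v')` for `v = (a, b)`,
`v' = (a', b')`. -/
def polarForm (k₁ k₂ α a b a' b' : ℝ) : ℝ :=
  2 * k₁ * a * a' + 2 * k₂ * b * b' + α * (a' * b + a * b')

lemma polarForm_mul_self (k₁ k₂ α a b r : ℝ) :
    polarForm k₁ k₂ α a b (r * a) (r * b) = 2 * r * quadForm k₁ k₂ α a b := by
  unfold polarForm quadForm; ring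

lemma four_mul_quadForm_mul_quadForm_sub_polarForm_sq (k₁ k₂ α a b a' b' : ℝ) :
    4 * quadForm k₁ k₂ α a b * quadForm k₁ k₂ α a' b' - polarForm k₁ k₂ α a b a' b' ^ 2
      = (4 * k₁ * k₂ - α ^ 2) * (a * b' - a' * b) ^ 2 := by
  unfold polarForm quadForm; ring

section

variable {x₁ x₂ x₁' x₂' : ℝ → ℝ} {k₁ k₂ α t : ℝ}

lemma hasDerivAt_quadForm {a' b' : ℝ} (h₁ : HasDerivAt x₁ a' t) (h₂ : HasDerivAt x₂ b' t) :
    HasDerivAt (fun s => quadForm k₁ k₂ α (x₁ s) (x₂ s))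
      (polarForm k₁ k₂ α (x₁ t) (x₂ t) a' b') t := by
  have := (((h₁.pow 2).const_mul k₁).add ((h₂.pow 2).const_mul k₂)).add
    ((h₁.const_mul α).mul h₂)
  refine this.congr_deriv ?_
  unfold polarForm; ring

lemma hasDerivAt_polarForm {a'' b'' : ℝ} (h₁ : HasDerivAt x₁ (x₁' t) t)
    (h₂ : HasDerivAt x₂ (x₂' t) t) (h₁' : HasDerivAt x₁' a'' t) (h₂' : HasDerivAt x₂' b'' t) :
    HasDerivAt (fun s => polarForm k₁ k₂ α (x₁ s) (x₂ s) (x₁' s) (x₂' s))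
      (2 * quadForm k₁ k₂ α (x₁' t) (x₂' t) + polarForm k₁ k₂ α (x₁ t) (x₂ t) a'' b'') t := by
  have := (((h₁.const_mul (2 * k₁)).mul h₁').add ((h₂.const_mul (2 * k₂)).mul h₂')).add
    (((h₁'.mul h₂).add (h₁.mul h₂')).const_mul α)
  refine this.congr_deriv ?_
  unfold polarForm quadForm; ring

end

/-- Ermakov: for `y = u√Q` with `Q' = N`, this is `y'' = -ω²y + (u⁴K/4)/y³`. -/
lemma hasDerivAt_deriv_const_mul_sqrt {Q N : ℝ → ℝ} {P ω K t : ℝ} (u : ℝ) (hu : u ≠ 0)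
    (hQ : HasDerivAt Q (N t) t) (hN : HasDerivAt N (2 * P - 2 * ω ^ 2 * Q t) t)
    (hK : 4 * Q t * P - N t ^ 2 = K) (hpos : 0 < Q t) :
    HasDerivAt (fun s => u * (N s / (2 * √(Q s))))
      (-ω ^ 2 * (u * √(Q t)) + u ^ 4 * K / 4 / (u * √(Q t)) ^ 3) t := by
  have := (hN.div ((hQ.sqrt hpos.ne').const_mul 2) (by positivity)).const_mul u
  refine this.congr_deriv ?_
  set s := √(Q t)
  have hs : 0 < s := Real.sqrt_pos.mpr hpos
  have hsq : s ^ 2 = Q t := Real.sq_sqrt hpos.le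
  rw [← hK, ← hsq]
  field_simp
  ring

theorem milne_pinney_superposition_rule_general
    (I : Set ℝ)
    (ω : ℝ → ℝ) (c : ℝ) (x₁ x₁' x₂ x₂' : ℝ → ℝ)
    (hx₁ : ∀ t ∈ I, HasDerivAt x₁ (x₁' t) t)
    (hx₁' : ∀ t ∈ I, HasDerivAt x₁' (-ω t ^ 2 * x₁ t) t)
    (hx₂ : ∀ t ∈ I, HasDerivAt x₂ (x₂' t) t)
    (hx₂' : ∀ t ∈ I, HasDerivAt x₂' (-ω t ^ 2 * x₂ t) t)
    (W₀ : ℝ) (hW₀ : W₀ ≠ 0)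
    (hW : ∀ t ∈ I, x₁ t * x₂' t - x₁' t * x₂ t = W₀)
    (k₁ k₂ : ℝ) (hkc : 0 ≤ 4 * k₁ * k₂ - c * W₀ ^ 2)
    (hQ : ∀ t ∈ I, 0 < k₁ * x₁ t ^ 2 + k₂ * x₂ t ^ 2
      + Real.sqrt (4 * k₁ * k₂ - c * W₀ ^ 2) * x₁ t * x₂ t) :
    (∀ t ∈ I, 0 < (Real.sqrt 2 / |W₀|) *
      Real.sqrt (k₁ * x₁ t ^ 2 + k₂ * x₂ t ^ 2
        + Real.sqrt (4 * k₁ * k₂ - c * W₀ ^ 2) * x₁ t * x₂ t)) ∧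
    ∃ x' : ℝ → ℝ,
      (∀ t ∈ I, HasDerivAt (fun s => (Real.sqrt 2 / |W₀|) *
        Real.sqrt (k₁ * x₁ s ^ 2 + k₂ * x₂ s ^ 2
          + Real.sqrt (4 * k₁ * k₂ - c * W₀ ^ 2) * x₁ s * x₂ s)) (x' t) t) ∧
      (∀ t ∈ I, HasDerivAt x'
        (-ω t ^ 2 * ((Real.sqrt 2 / |W₀|) *
            Real.sqrt (k₁ * x₁ t ^ 2 + k₂ * x₂ t ^ 2
              + Real.sqrt (4 * k₁ * k₂ - c * W₀ ^ 2) * x₁ t * x₂ t))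
          + c / ((Real.sqrt 2 / |W₀|) *
            Real.sqrt (k₁ * x₁ t ^ 2 + k₂ * x₂ t ^ 2
              + Real.sqrt (4 * k₁ * k₂ - c * W₀ ^ 2) * x₁ t * x₂ t)) ^ 3) t) := by
  set α := √(4 * k₁ * k₂ - c * W₀ ^ 2) with hα
  set u := √2 / |W₀| with hu
  have hu_ne : u ≠ 0 := by positivity
  have hu4 : u ^ 4 * (c * W₀ ^ 4) / 4 = c := by
    rw [hu, div_pow, show (4 : ℕ) = 2 * 2 from rfl, pow_mul, pow_mul, Real.sq_sqrt zero_le_two,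
      sq_abs]
    field_simp
    ring
  have hQ' (t) (ht : t ∈ I) :=
    hasDerivAt_quadForm (k₁ := k₁) (k₂ := k₂) (α := α) (hx₁ t ht) (hx₂ t ht)
  refine ⟨fun t ht => by have := hQ t ht; positivity,
    fun t => u * (polarForm k₁ k₂ α (x₁ t) (x₂ t) (x₁' t) (x₂' t) /
      (2 * √(quadForm k₁ k₂ α (x₁ t) (x₂ t)))),
    fun t ht => ((hQ' t ht).sqrt (hQ t ht).ne').const_mul u, fun t ht => ?_⟩
  have hN : HasDerivAt (fun s => polarForm k₁ k₂ α (x₁ s) (x₂ s) (x₁' s) (x₂' s))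
      (2 * quadForm k₁ k₂ α (x₁' t) (x₂' t) - 2 * ω t ^ 2 * quadForm k₁ k₂ α (x₁ t) (x₂ t)) t := by
    refine (hasDerivAt_polarForm (hx₁ t ht) (hx₂ t ht) (hx₁' t ht) (hx₂' t ht)).congr_deriv ?_
    rw [polarForm_mul_self]
    ring
  have hK : 4 * quadForm k₁ k₂ α (x₁ t) (x₂ t) * quadForm k₁ k₂ α (x₁' t) (x₂' t)
      - polarForm k₁ k₂ α (x₁ t) (x₂ t) (x₁' t) (x₂' t) ^ 2 = c * W₀ ^ 4 := by
    rw [four_mul_quadForm_mul_quadForm_sub_polarForm_sq, hα, Real.sq_sqrt hkc, hW t ht]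
    ring
  have := hasDerivAt_deriv_const_mul_sqrt (Q := fun s => quadForm k₁ k₂ α (x₁ s) (x₂ s))
    (N := fun s => polarForm k₁ k₂ α (x₁ s) (x₂ s) (x₁' s) (x₂' s)) u hu_ne (hQ' t ht) hN hK
    (hQ t ht)
  rwa [hu4] at this

/-- The superposition formula for Milne–Pinney equations: if `x₁, x₂` solve the
`t`-dependent harmonic oscillator `x'' = -ω(t)² x` with constant nonzero Wronskian `W₀`,
`4k₁k₂ - c W₀² ≥ 0` and `Q = k₁ x₁² + k₂ x₂² + √(4k₁k₂ - c W₀²) x₁ x₂ > 0`, then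
`x = (√2/|W₀|) √Q` is a positive solution of the Milne–Pinney equation
`x'' = -ω(t)² x + c/x³`. -/
theorem milne_pinney_superposition_rule
    (I : Set ℝ) (hI : IsOpen I) (hI' : I.OrdConnected)
    (ω : ℝ → ℝ) (c : ℝ) (x₁ x₁' x₂ x₂' : ℝ → ℝ)
    (hx₁ : ∀ t ∈ I, HasDerivAt x₁ (x₁' t) t)
    (hx₁' : ∀ t ∈ I, HasDerivAt x₁' (-ω t ^ 2 * x₁ t) t)
    (hx₂ : ∀ t ∈ I, HasDerivAt x₂ (x₂' t) t)
    (hx₂' : ∀ t ∈ I, HasDerivAt x₂' (-ω t ^ 2 * x₂ t) t)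
    (W₀ : ℝ) (hW₀ : W₀ ≠ 0)
    (hW : ∀ t ∈ I, x₁ t * x₂' t - x₁' t * x₂ t = W₀)
    (k₁ k₂ : ℝ) (hkc : 0 ≤ 4 * k₁ * k₂ - c * W₀ ^ 2)
    (hQ : ∀ t ∈ I, 0 < k₁ * x₁ t ^ 2 + k₂ * x₂ t ^ 2
      + Real.sqrt (4 * k₁ * k₂ - c * W₀ ^ 2) * x₁ t * x₂ t) :
    (∀ t ∈ I, 0 < (Real.sqrt 2 / |W₀|) *
      Real.sqrt (k₁ * x₁ t ^ 2 + k₂ * x₂ t ^ 2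
        + Real.sqrt (4 * k₁ * k₂ - c * W₀ ^ 2) * x₁ t * x₂ t)) ∧
    ∃ x' : ℝ → ℝ,
      (∀ t ∈ I, HasDerivAt (fun s => (Real.sqrt 2 / |W₀|) *
        Real.sqrt (k₁ * x₁ s ^ 2 + k₂ * x₂ s ^ 2
          + Real.sqrt (4 * k₁ * k₂ - c * W₀ ^ 2) * x₁ s * x₂ s)) (x' t) t) ∧
      (∀ t ∈ I, HasDerivAt x'
        (-ω t ^ 2 * ((Real.sqrt 2 / |W₀|) *
            Real.sqrt (k₁ * x₁ t ^ 2 + k₂ * x₂ t ^ 2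
              + Real.sqrt (4 * k₁ * k₂ - c * W₀ ^ 2) * x₁ t * x₂ t))
          + c / ((Real.sqrt 2 / |W₀|) *
            Real.sqrt (k₁ * x₁ t ^ 2 + k₂ * x₂ t ^ 2
              + Real.sqrt (4 * k₁ * k₂ - c * W₀ ^ 2) * x₁ t * x₂ t)) ^ 3) t) :=
  milne_pinney_superposition_rule_general I ω c x₁ x₁' x₂ x₂' hx₁ hx₁' hx₂ hx₂' W₀ hW₀ hW k₁ k₂ hkc
    hQ
end

section
/- Let s ≥ 2 and consider the Lie algebra gl(s,ℝ) of s×s real matrices with the commutator bracket [A,B] = AB − BA. Let E_{i,j} (0 ≤ i,j ≤ s−1) denote the standard matrix units and let Δ := Σ_{i=0}^{s−2} E_{i,i+1} + E_{s−1,0}. Then the Lie subalgebra of gl(s,ℝ) generated by the set {E_{s−1,j} : j = 0,…,s−1} ∪ {Δ} is all of gl(s,ℝ). (This is the paper's claim that the minimal Lie algebra V^{X^b_{(1)}} of the first-order linear system associated with the s-th order linear homogeneous ODE x^{(s)} = −Σ_{l} b_l(t) x^{(l)}, with coefficients b whose coefficient vectors span ℝ^s, is spanned by all the vector fields X_{i,j}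 = u^j ∂/∂u^i, hence is isomorphic to gl(s,ℝ).) -/
attribute [local instance] LieRing.ofAssociativeRing

open Matrix
open scoped Fin.NatCast Fin.CommRing

/-!
For the cyclic shift `Δ` one has `⁅Δ, E_{k,j}⁆ = E_{k-1,j} - E_{k,j+1}` (indices mod `s`).
So a Lie subalgebra containing `Δ` and the whole row `k` of matrix units also contains
row `k - 1`; going around the cycle from the last row it contains every matrix unit,
and these span `gl(s)`.
-/

variable {R : Type*} [CommRing R]

theorem LieSubalgebra.eq_top_of_forall_single_mem {n : Type*} [Fintype n] [DecidableEq n]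
    (K : LieSubalgebra R (Matrix n n R)) (h : ∀ i j, single i j (1 : R) ∈ K) : K = ⊤ := by
  rw [← LieSubalgebra.toSubmodule_eq_top, eq_top_iff, ← (stdBasis R n n).span_eq,
    Submodule.span_le]
  rintro _ ⟨⟨i, j⟩, rfl⟩
  rw [stdBasis_eq_single]
  exact h i j

section CyclicShift

variable {s : ℕ} [NeZero s]

theorem cyclicShift_mul_single (k j : Fin s) :
    (∑ i : Fin s, single i (i + 1) (1 : R)) * single k j 1 = single (k - 1) j 1 := by
  rw [Finset.sum_mul, Finset.sum_eq_single (k - 1)]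
  · rw [sub_add_cancel, single_mul_single_same, one_mul]
  · exact fun i _ hi => single_mul_single_of_ne (h := fun h => hi (eq_sub_of_add_eq h)) ..
  · exact fun h => absurd (Finset.mem_univ _) h

theorem single_mul_cyclicShift (k j : Fin s) :
    single k j (1 : R) * ∑ i : Fin s, single i (i + 1) 1 = single k (j + 1) 1 := by
  rw [Finset.mul_sum, Finset.sum_eq_single j]
  · rw [single_mul_single_same, one_mul]
  · exact fun i _ hi => single_mul_single_of_ne (h := Ne.symm hi) ..
  · exact fun h => absurd (Finset.mem_univ _) h

theorem cyclicShift_lie_single (k j : Fin s) :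
    ⁅∑ i : Fin s, single i (i + 1) (1 : R), single k j (1 : R)⁆ =
      single (k - 1) j 1 - single k (j + 1) 1 := by
  rw [Ring.lie_def, cyclicShift_mul_single, single_mul_cyclicShift]

variable {K : LieSubalgebra R (Matrix (Fin s) (Fin s) R)}

theorem single_sub_one_mem_of_forall_single_mem
    (hΔ : ∑ i : Fin s, single i (i + 1) (1 : R) ∈ K) {k : Fin s}
    (hk : ∀ j, single k j (1 : R) ∈ K) (j : Fin s) : single (k - 1) j (1 : R) ∈ K := by
  have h := K.add_mem (K.lie_mem hΔ (hk j)) (hk (j + 1))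
  rwa [cyclicShift_lie_single, sub_add_cancel] at h

theorem single_mem_of_forall_single_mem
    (hΔ : ∑ i : Fin s, single i (i + 1) (1 : R) ∈ K) {k : Fin s}
    (hk : ∀ j, single k j (1 : R) ∈ K) (i j : Fin s) : single i j (1 : R) ∈ K := by
  have rows_above : ∀ m : ℕ, ∀ j, single (k - (m : Fin s)) j (1 : R) ∈ K := by
    intro m
    induction m with
    | zero => simpa using hk
    | succ m ih =>
      have hrow : k - ((m + 1 : ℕ) : Fin s) = k - (m : Fin s) - 1 := by push_cast; ring
      rw [hrow]
      exact single_sub_one_mem_of_forall_single_mem hΔ ih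
  simpa only [Fin.cast_val_eq_self, sub_sub_cancel] using rows_above (k - i).val j

end CyclicShift

/-- The Lie subalgebra of `gl(s,ℝ)` (with the commutator bracket) generated by the matrix
units `E_{s-1,j}`, `j = 0,…,s-1`, together with `Δ = Σ_{i=0}^{s-2} E_{i,i+1} + E_{s-1,0}`,
is all of `gl(s,ℝ)`.  (Here `i + 1` is addition in `Fin s`, which wraps around, so the sum
`Σ_{i : Fin s} E_{i,i+1}` is exactly `Σ_{i=0}^{s-2} E_{i,i+1} + E_{s-1,0}`.) -/
theorem lieSpan_last_row_and_shift_eq_top (s : ℕ) (hs : 2 ≤ s) :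
    LieSubalgebra.lieSpan ℝ (Matrix (Fin s) (Fin s) ℝ)
      ({∑ i : Fin s, Matrix.single i (i + ⟨1, by omega⟩) 1} ∪
        Set.range (fun j : Fin s =>
          Matrix.single (⟨s - 1, by omega⟩ : Fin s) j 1)) = ⊤ := by
  have : NeZero s := ⟨by omega⟩
  have hone : (⟨1, by omega⟩ : Fin s) = 1 := Fin.ext (Nat.mod_eq_of_lt hs).symm
  rw [hone]
  apply LieSubalgebra.eq_top_of_forall_single_mem
  exact single_mem_of_forall_single_mem (LieSubalgebra.subset_lieSpan (Or.inl rfl))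
    (fun j => LieSubalgebra.subset_lieSpan (Or.inr ⟨j, rfl⟩))
end
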